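/- Let Q = [0,∞)² carry its standard structure of a 2-dimensional smooth manifold with corners (the Euclidean quadrant), let R = C∞(Q,ℝ) be the commutative ring of smooth real-valued functions on Q, and let I ⊆ R be the ideal generated by the single function (x,y) ↦ x + y. Then the quotient ring R/I is infinite-dimensional as a real vector space; indeed, the images in R/I of the functions (x,y) ↦ xᵏ, for k ∈ ℕ, are linearly independent over ℝ. This holds even though the zero set of x + y in Q is the single point (0,0). -/

import Mathlib

open scoped Manifold

noncomputable section

/-- The ring `R = C∞(Q,ℝ)` of smooth real-valued functions on the Euclidean quadrant
`Q = [0,∞)²`, with its standard structure of a 2-dimensional smooth manifold with corners. -/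
abbrev QuadrantSmoothFunctions : Type :=
  C^(⊤ : ℕ∞)⟮modelWithCornersEuclideanQuadrant 2, EuclideanQuadrant 2; ℝ⟯

/-- The `i`-th coordinate function on the quadrant `[0,∞)²`, as a smooth function. -/
def quadrantCoord (i : Fin 2) : QuadrantSmoothFunctions :=
  ⟨fun q => q.val i,
    (((EuclideanSpace.proj (𝕜 := ℝ) i).contDiff).contMDiff).comp (modelWithCornersEuclideanQuadrant 2).contMDiff⟩

/-- The ideal of `C∞([0,∞)²,ℝ)` generated by the function `(x, y) ↦ x + y`. -/
def quadrantIdeal : Ideal QuadrantSmoothFunctions :=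
  Ideal.span {quadrantCoord 0 + quadrantCoord 1}

/-! If `P(x) = a(x, y) (x + y)` on the quadrant with `a` smooth, differentiating in `y`, along
which the left side is constant, shows that `a` is again a smooth multiple of `x + y`. Iterating,
`P(t) = aₙ(t, 0) tⁿ` on the edge `y = 0` for every `n`, so `P` vanishes to infinite order at `0`
and is zero: no nonzero polynomial in `x` lies in the ideal `(x + y)`. -/

open Set Filter Topology Polynomial
open scoped ContDiff

section DivisionByLinearForm

variable {E : Type*} [NormedAddCommGroup E] [NormedSpace ℝ E] {s : Set E} {f G : E → ℝ}
  {f' : E → E →L[ℝ] ℝ} {L : E →L[ℝ] ℝ} {e : E}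

/-- Differentiating `f = G * L ^ (m + 1)` along `e` gives `(m + 1) G L ^ m + L ^ (m + 1) ∂ₑG = 0`,
so `G = -L ∂ₑG / (m + 1)`: one more factor of `L` splits off. -/
theorem exists_contDiffOn_eq_mul_pow_succ_succ (hs : UniqueDiffOn ℝ s) (hLe : L e = 1)
    (hf : ∀ v ∈ s, HasFDerivWithinAt f (f' v) s v) (hfe : ∀ v ∈ s, f' v e = 0)
    {m : ℕ} (hG : ContDiffOn ℝ ∞ G s) (hfG : ∀ v ∈ s, f v = G v * L v ^ (m + 1)) :
    ∃ G' : E → ℝ, ContDiffOn ℝ ∞ G' s ∧ ∀ v ∈ s, f v = G' v * L v ^ (m + 2) := by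
  refine ⟨fun v => -fderivWithin ℝ G s v e / (m + 1), ?_, fun v hv => ?_⟩
  · exact ((hG.fderivWithin hs le_rfl).clm_apply contDiffOn_const).neg.div_const _
  have hGL : HasFDerivWithinAt (fun w => G w * L w ^ (m + 1))
      (G v • (((m + 1) • L v ^ m) • L) + L v ^ (m + 1) • fderivWithin ℝ G s v) s v :=
    ((hG.differentiableOn (by simp) v hv).hasFDerivWithinAt).mul
      (L.hasFDerivWithinAt.pow (m + 1))
  have hderiv := congrArg (· e) <| (hs v hv).eq (hGL.congr hfG (hfG v hv)) (hf v hv)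
  simp only [add_apply, smul_apply, hLe, hfe v hv, smul_eq_mul, nsmul_eq_mul] at hderiv
  rw [hfG v hv]
  field_simp
  push_cast at hderiv
  linear_combination L v * hderiv

theorem exists_contDiffOn_eq_mul_pow_succ (hs : UniqueDiffOn ℝ s) (hLe : L e = 1)
    (hf : ∀ v ∈ s, HasFDerivWithinAt f (f' v) s v) (hfe : ∀ v ∈ s, f' v e = 0)
    (hG : ContDiffOn ℝ ∞ G s) (hfG : ∀ v ∈ s, f v = G v * L v) (m : ℕ) :
    ∃ G' : E → ℝ, ContDiffOn ℝ ∞ G' s ∧ ∀ v ∈ s, f v = G' v * L v ^ (m + 1) := by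
  induction m with
  | zero => exact ⟨G, hG, by simpa using hfG⟩
  | succ m ih =>
    obtain ⟨G', hG', hfG'⟩ := ih
    exact exists_contDiffOn_eq_mul_pow_succ_succ hs hLe hf hfe hG' hfG'

end DivisionByLinearForm

/-- Write `P = X ^ n * Q` with `n` the trailing degree, so `Q 0 ≠ 0`; taking `n + 1` in the
hypothesis gives `Q t = g t * t` for `t > 0`, and letting `t → 0⁺` forces `Q 0 = 0`. -/
theorem Polynomial.eq_zero_of_forall_eq_mul_pow {P : ℝ[X]}
    (h : ∀ n : ℕ, ∃ g : ℝ → ℝ, ContinuousWithinAt g (Ioi 0) 0 ∧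
      ∀ t > 0, P.eval t = g t * t ^ (n + 1)) : P = 0 := by
  by_contra hP
  set n := P.natTrailingDegree
  obtain ⟨Q, hPQ⟩ : X ^ n ∣ P :=
    X_pow_dvd_iff.mpr fun d hd => coeff_eq_zero_of_lt_natTrailingDegree hd
  have hQ0 : Q.eval 0 ≠ 0 := by
    have hcoeff : P.coeff n = Q.coeff 0 := by simp [hPQ, coeff_X_pow_mul']
    rwa [← coeff_zero_eq_eval_zero, ← hcoeff, coeff_natTrailingDegree_ne_zero]
  obtain ⟨g, hg, hPg⟩ := h n
  have hQg : ∀ t > 0, Q.eval t = g t * t := fun t ht => by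
    have := hPg t ht
    rw [hPQ, eval_mul, eval_pow, eval_X, pow_succ] at this
    exact mul_left_cancel₀ (pow_ne_zero n ht.ne') (this.trans (by ring))
  have hlim : Tendsto (fun t => g t * t) (𝓝[>] 0) (𝓝 (Q.eval 0)) :=
    (Q.continuous.tendsto 0).mono_left nhdsWithin_le_nhds |>.congr' <|
      eventually_nhdsWithin_of_forall hQg
  have hlim' : Tendsto (fun t => g t * t) (𝓝[>] 0) (𝓝 (g 0 * 0)) :=
    hg.tendsto.mul (tendsto_id.mono_left nhdsWithin_le_nhds)
  exact hQ0 (by simpa using tendsto_nhds_unique hlim hlim')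

theorem quadrantCoord_apply (i : Fin 2) (q : EuclideanQuadrant 2) :
    quadrantCoord i q = q.val i := rfl

theorem aeval_quadrantCoord_apply (P : ℝ[X]) (q : EuclideanQuadrant 2) :
    aeval (quadrantCoord 0) P q = P.eval (q.val 0) :=
  (aeval_algHom_apply ((Pi.evalAlgHom ℝ (fun _ => ℝ) q).comp ContMDiffMap.coeFnAlgHom) _ P).symm

theorem ContMDiffMap.contDiffOn_comp_symm {𝕜 E H E' : Type*} [NontriviallyNormedField 𝕜]
    [NormedAddCommGroup E] [NormedSpace 𝕜 E] [TopologicalSpace H] [NormedAddCommGroup E']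
    [NormedSpace 𝕜 E'] {I : ModelWithCorners 𝕜 E H} {n : WithTop ℕ∞}
    (f : C^n⟮I, H; 𝓘(𝕜, E'), E'⟯) : ContDiffOn 𝕜 n (f ∘ I.symm) (range I) :=
  contMDiffOn_iff_contDiffOn.mp (f.contMDiff.comp_contMDiffOn I.contMDiffOn_symm)

theorem smul_single_mem_range_modelWithCornersEuclideanQuadrant {n : ℕ} (i : Fin n) {t : ℝ}
    (ht : 0 ≤ t) : t • EuclideanSpace.single i 1 ∈ range (modelWithCornersEuclideanQuadrant n) :=
  ⟨⟨_, fun j => by by_cases hj : j = i <;> simp [hj, ht]⟩, rfl⟩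

theorem eq_zero_of_aeval_quadrantCoord_mem_quadrantIdeal {P : ℝ[X]}
    (hP : aeval (quadrantCoord 0) P ∈ quadrantIdeal) : P = 0 := by
  obtain ⟨a, ha⟩ := Ideal.mem_span_singleton'.mp hP
  set I := modelWithCornersEuclideanQuadrant 2
  set x : EuclideanSpace ℝ (Fin 2) →L[ℝ] ℝ := EuclideanSpace.proj 0
  set L : EuclideanSpace ℝ (Fin 2) →L[ℝ] ℝ := x + EuclideanSpace.proj 1
  have hfactor : ∀ v ∈ range I, P.eval (v 0) = (a ∘ I.symm) v * L v := by
    rintro _ ⟨q, rfl⟩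
    have := congrArg (· q) ha
    simp only [ContMDiffMap.coe_mul, Pi.mul_apply, ContMDiffMap.coe_add, Pi.add_apply,
      quadrantCoord_apply, aeval_quadrantCoord_apply] at this
    change P.eval (q.val 0) = a (I.symm (I q)) * (q.val 0 + q.val 1)
    rw [I.left_inv, ← this]
  have hderiv : ∀ v ∈ range I, HasFDerivWithinAt (fun v => P.eval (v 0))
      ((derivative P).eval (v 0) • x) (range I) v := fun v _ => by
    have := (P.hasDerivAt (v 0)).comp_hasFDerivAt v x.hasFDerivAt
    exact this.hasFDerivWithinAt
  refine Polynomial.eq_zero_of_forall_eq_mul_pow fun n => ?_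
  obtain ⟨G, hG, hPG⟩ := exists_contDiffOn_eq_mul_pow_succ I.uniqueDiffOn
    (e := EuclideanSpace.single 1 1) (by simp [L, x]) hderiv (by simp [x])
    a.contDiffOn_comp_symm hfactor n
  refine ⟨fun t => G (t • EuclideanSpace.single 0 1), ?_, fun t ht => ?_⟩
  · have hcurve : ContinuousOn (fun t : ℝ => G (t • EuclideanSpace.single 0 1)) (Ici 0) :=
      hG.continuousOn.comp (by fun_prop) fun t ht =>
        smul_single_mem_range_modelWithCornersEuclideanQuadrant 0 ht
    exact (hcurve 0 self_mem_Ici).mono Ioi_subset_Ici_self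
  · simpa [L, x] using hPG _ (smul_single_mem_range_modelWithCornersEuclideanQuadrant 0 ht.le)

theorem quadrantCoord_add_apply_eq_zero_iff (q : EuclideanQuadrant 2) :
    (quadrantCoord 0 + quadrantCoord 1) q = 0 ↔ q.val = 0 := by
  have hx := q.2 0
  have hy := q.2 1
  simp only [ContMDiffMap.coe_add, Pi.add_apply, quadrantCoord_apply]
  constructor
  · intro h
    ext i
    fin_cases i <;> simp <;> linarith
  · intro h
    simp [h]

theorem linearIndependent_mk_quadrantCoord_pow :
    LinearIndependent ℝ (fun k : ℕ => Ideal.Quotient.mk quadrantIdeal (quadrantCoord 0 ^ k)) := by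
  let φ := ((Ideal.Quotient.mkₐ ℝ quadrantIdeal).comp (aeval (quadrantCoord 0))).toLinearMap
  have hφ : LinearMap.ker φ = ⊥ := LinearMap.ker_eq_bot'.mpr fun P hP =>
    eq_zero_of_aeval_quadrantCoord_mem_quadrantIdeal (Ideal.Quotient.eq_zero_iff_mem.mp hP)
  have hφX : (fun k : ℕ => Ideal.Quotient.mk quadrantIdeal (quadrantCoord 0 ^ k)) =
      φ ∘ basisMonomials ℝ := by
    ext k
    simp [φ, coe_basisMonomials]
  rw [hφX]
  exact (basisMonomials ℝ).linearIndependent.map' φ hφ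

/-- **`C∞([0,∞)²)/(x+y)` is infinite-dimensional although its zero set is a point**
(Example 4.6(iii) of the paper). The zero set of `x + y` in the quadrant is the single
point `(0,0)`, yet the images of the functions `(x,y) ↦ xᵏ`, `k ∈ ℕ`, are linearly
independent over `ℝ` in the quotient ring, which is therefore infinite-dimensional as a
real vector space. -/
theorem quadrant_quotient_infiniteDimensional :
    (∀ q : EuclideanQuadrant 2,
        (quadrantCoord 0 + quadrantCoord 1) q = 0 ↔ q.val = 0) ∧
    LinearIndependent ℝ
      (fun k : ℕ => Ideal.Quotient.mk quadrantIdeal ((quadrantCoord 0) ^ k)) ∧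
    ¬ FiniteDimensional ℝ (QuadrantSmoothFunctions ⧸ quadrantIdeal) :=
  ⟨quadrantCoord_add_apply_eq_zero_iff, linearIndependent_mk_quadrantCoord_pow, fun _ =>
    Module.Finite.not_linearIndependent_of_infinite _ linearIndependent_mk_quadrantCoord_pow⟩
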